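/- arXiv:q-bio/0407013 — 3 statements merged into one kernel-verified Lean document; each statement's English description precedes it below -/
import Mathlib

section
/- (No single-pulse for low gain and high threshold) Suppose u: ℝ → ℝ is continuous, u(x) > u_T on (-x_T, x_T), u(±x_T)=u_T, u(x)<u_T otherwise, u attains its maximum at 0, and u satisfies u(x) = ∫_{-x_T}^{x_T} (A e^{-a|x-y|} - e^{-|x-y|})(α(u(y)-u_T)+1) dy. Then it cannot hold that both α < a/(2A) and u_T > 2A/a. -/
open Real intervalIntegral

lemma exp_abs_integral_le (a T : ℝ) (ha : 0 < a) (hT : 0 ≤ T) :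
    (∫ y in (-T)..T, Real.exp (-a * |y|)) ≤ 2 / a := by
  have hcont : Continuous fun y : ℝ => Real.exp (-a * |y|) := by
    exact Real.continuous_exp.comp (continuous_const.mul continuous_abs)
  have hpos : (∫ y in (0:ℝ)..T, Real.exp (-a * |y|))
      = ∫ y in (0:ℝ)..T, Real.exp (-a * y) := by
    apply intervalIntegral.integral_congr
    intro y hy
    rw [Set.uIcc_of_le hT] at hy
    simp [abs_of_nonneg hy.1]
  have hval : (∫ y in (0:ℝ)..T, Real.exp (-a * y)) = (1 - Real.exp (-a * T)) / a := by
    have h := intervalIntegral.integral_comp_mul_left (fun x => Real.exp x)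
      (a := (0:ℝ)) (b := T) (c := -a) (by simpa using ha.ne')
    simp only [integral_exp, mul_zero, smul_eq_mul] at h
    rw [h, Real.exp_zero, inv_neg, neg_mul]
    have hane : a ≠ 0 := ha.ne'
    field_simp
    ring
  have hneg : (∫ y in (-T)..(0:ℝ), Real.exp (-a * |y|))
      = ∫ y in (0:ℝ)..T, Real.exp (-a * |y|) := by
    have h := intervalIntegral.integral_comp_neg (fun y => Real.exp (-a * |y|))
      (a := (0:ℝ)) (b := T)
    simp only [abs_neg, neg_zero] at h
    rw [← h]
  have hsplit : (∫ y in (-T)..T, Real.exp (-a * |y|))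
      = (∫ y in (-T)..(0:ℝ), Real.exp (-a * |y|))
        + ∫ y in (0:ℝ)..T, Real.exp (-a * |y|) :=
    (intervalIntegral.integral_add_adjacent_intervals
      (hcont.intervalIntegrable _ _) (hcont.intervalIntegrable _ _)).symm
  rw [hsplit, hneg, hpos, hval]
  have hexp : 0 < Real.exp (-a * T) := Real.exp_pos _
  rw [← add_div, div_le_div_iff₀ ha ha]
  nlinarith

theorem no_single_pulse_low_gain_high_threshold
    (A a α uT xT : ℝ) (u : ℝ → ℝ)
    (hA : 1 < A) (ha : 1 < a) (hα : 0 ≤ α) (huT : 0 < uT) (hxT : 0 < xT)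
    (hu_cont : Continuous u)
    (hu_above : ∀ x ∈ Set.Ioo (-xT) xT, uT < u x)
    (hu_eq1 : u xT = uT) (hu_eq2 : u (-xT) = uT)
    (hu_below : ∀ x : ℝ, xT < |x| → u x < uT)
    (hu_max : ∀ x : ℝ, u x ≤ u 0)
    (hu_int : ∀ x : ℝ, u x =
      ∫ y in (-xT)..xT,
        (A * Real.exp (-a * |x - y|) - Real.exp (-|x - y|)) * (α * (u y - uT) + 1)) :
    ¬(α < a / (2 * A) ∧ 2 * A / a < uT) := by
  rintro ⟨hα', huT'⟩
  have hA0 : (0:ℝ) < A := by linarith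
  have ha0 : (0:ℝ) < a := by linarith
  have hM : 0 ≤ u 0 - uT := by
    have := hu_max xT; rw [hu_eq1] at this; linarith
  have h_ge : ∀ y ∈ Set.Icc (-xT) xT, uT ≤ u y := by
    intro y hy
    rcases eq_or_lt_of_le hy.1 with h1 | h1
    · rw [← h1, hu_eq2]
    rcases eq_or_lt_of_le hy.2 with h2 | h2
    · rw [h2, hu_eq1]
    · exact (hu_above y ⟨h1, h2⟩).le
  -- pointwise bound on the integrand at x = 0
  have hpt : ∀ y ∈ Set.Icc (-xT) xT,
      (A * Real.exp (-a * |(0:ℝ) - y|) - Real.exp (-|(0:ℝ) - y|)) * (α * (u y - uT) + 1)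
        ≤ (A * (α * (u 0 - uT) + 1)) * Real.exp (-a * |y|) := by
    intro y hy
    simp only [zero_sub, abs_neg]
    have hf0 : (0:ℝ) ≤ α * (u y - uT) + 1 := by
      nlinarith [mul_nonneg hα (sub_nonneg.2 (h_ge y hy))]
    have hfle : α * (u y - uT) + 1 ≤ α * (u 0 - uT) + 1 := by
      nlinarith [hu_max y]
    have hw : A * Real.exp (-a * |y|) - Real.exp (-|y|) ≤ A * Real.exp (-a * |y|) := by
      nlinarith [Real.exp_pos (-|y|)]
    have hwpos : (0:ℝ) ≤ A * Real.exp (-a * |y|) :=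
      le_of_lt (mul_pos hA0 (Real.exp_pos _))
    calc (A * Real.exp (-a * |y|) - Real.exp (-|y|)) * (α * (u y - uT) + 1)
        ≤ (A * Real.exp (-a * |y|)) * (α * (u 0 - uT) + 1) :=
          mul_le_mul hw hfle hf0 hwpos
      _ = (A * (α * (u 0 - uT) + 1)) * Real.exp (-a * |y|) := by ring
  have hcont1 : Continuous fun y : ℝ =>
      (A * Real.exp (-a * |(0:ℝ) - y|) - Real.exp (-|(0:ℝ) - y|)) * (α * (u y - uT) + 1) := by
    fun_prop
  have hcont2 : Continuous fun y : ℝ =>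
      (A * (α * (u 0 - uT) + 1)) * Real.exp (-a * |y|) := by fun_prop
  have hbound : u 0 ≤ (A * (α * (u 0 - uT) + 1)) * ∫ y in (-xT)..xT, Real.exp (-a * |y|) := by
    have hmono := intervalIntegral.integral_mono_on (μ := MeasureTheory.volume) (by linarith : -xT ≤ xT)
      (hcont1.intervalIntegrable _ _) (hcont2.intervalIntegrable _ _) hpt
    rw [intervalIntegral.integral_const_mul] at hmono
    calc u 0 = _ := hu_int 0
      _ ≤ _ := hmono
  have hI : (∫ y in (-xT)..xT, Real.exp (-a * |y|)) ≤ 2 / a :=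
    exp_abs_integral_le a xT ha0 hxT.le
  have hcoef : (0:ℝ) ≤ A * (α * (u 0 - uT) + 1) := by
    nlinarith [mul_nonneg hα hM]
  have hfinal : u 0 ≤ (A * (α * (u 0 - uT) + 1)) * (2 / a) :=
    hbound.trans (mul_le_mul_of_nonneg_left hI hcoef)
  -- derive contradiction
  have h1 : α * (2 * A) < a := (lt_div_iff₀ (by linarith)).mp hα'
  have h2 : 2 * A < a * uT := by
    have := (div_lt_iff₀ ha0).mp huT'; linarith
  have h3 : uT ≤ u 0 := by linarith
  have key : (A * (α * (u 0 - uT) + 1)) * (2 / a) < u 0 := by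
    rw [show A * (α * (u 0 - uT) + 1) * (2 / a) = A * (α * (u 0 - uT) + 1) * 2 / a from by ring,
      div_lt_iff₀ ha0]
    nlinarith [mul_le_mul_of_nonneg_right h1.le hM]
  linarith
end

section
/- For a single pulse with the above hypotheses, u(0) ≤ α P u(c) + (1-α u_T) P for some c ∈ [-x_T, x_T], where P = 2A/a = ∫_ℝ A e^{-a|y|} dy. -/
theorem pulse_height_bound
    (A a α uT xT : ℝ) (u : ℝ → ℝ)
    (hA : 1 < A) (ha : 1 < a) (hα : 0 ≤ α) (huT : 0 < uT) (hxT : 0 < xT)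
    (hu_cont : Continuous u)
    (hu_above : ∀ x ∈ Set.Ioo (-xT) xT, uT < u x)
    (hu_eq1 : u xT = uT) (hu_eq2 : u (-xT) = uT)
    (hu_below : ∀ x : ℝ, xT < |x| → u x < uT)
    (hu_max : ∀ x : ℝ, u x ≤ u 0)
    (hu_int : ∀ x : ℝ, u x =
      ∫ y in (-xT)..xT,
        (A * Real.exp (-a * |x - y|) - Real.exp (-|x - y|)) * (α * (u y - uT) + 1)) :
    ∃ c ∈ Set.Icc (-xT) xT,
      u 0 ≤ α * (2 * A / a) * u c + (1 - α * uT) * (2 * A / a) := by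
  have ha0 : (0:ℝ) < a := by linarith
  have ha0' : a ≠ 0 := ne_of_gt ha0
  set f : ℝ → ℝ := fun y => α * (u y - uT) + 1 with hf
  -- uT ≤ u y on Icc
  have huy : ∀ y ∈ Set.Icc (-xT) xT, uT ≤ u y := by
    intro y hy
    rcases eq_or_lt_of_le hy.1 with h1 | h1
    · rw [← h1, hu_eq2]
    · rcases eq_or_lt_of_le hy.2 with h2 | h2
      · rw [h2, hu_eq1]
      · exact le_of_lt (hu_above y ⟨h1, h2⟩)
  have hf1 : ∀ y ∈ Set.Icc (-xT) xT, 1 ≤ f y := by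
    intro y hy
    have := huy y hy
    have : 0 ≤ α * (u y - uT) := mul_nonneg hα (by linarith)
    simp only [hf]; linarith
  have hfle : ∀ y : ℝ, f y ≤ f 0 := by
    intro y
    have := hu_max y
    have : α * (u y - uT) ≤ α * (u 0 - uT) := mul_le_mul_of_nonneg_left (by linarith) hα
    simp only [hf]; linarith
  have hf0 : 1 ≤ f 0 := hf1 0 ⟨by linarith, by linarith⟩
  -- continuity of pieces
  have hcg : Continuous fun y : ℝ => Real.exp (-a * |y|) :=
    Real.continuous_exp.comp ((continuous_const.mul continuous_abs))
  have hcf : Continuous f :=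
    (continuous_const.mul (hu_cont.sub continuous_const)).add continuous_const
  have hcg2 : Continuous fun y : ℝ => Real.exp (-a * |0 - y|) :=
    Real.continuous_exp.comp (continuous_const.mul (continuous_const.sub continuous_id).abs)
  have hcg3 : Continuous fun y : ℝ => Real.exp (-|0 - y|) :=
    Real.continuous_exp.comp (continuous_const.sub continuous_id).abs.neg
  -- Step 1: u 0 ≤ ∫ (A * exp(-a|y|)) * f 0
  have hxT' : (-xT) ≤ xT := by linarith
  have hint1 : IntervalIntegrable
      (fun y => (A * Real.exp (-a * |0 - y|) - Real.exp (-|0 - y|)) * (α * (u y - uT) + 1))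
      MeasureTheory.volume (-xT) xT :=
    Continuous.intervalIntegrable
      ((((continuous_const.mul hcg2).sub hcg3).mul hcf)) _ _
  have hint2 : IntervalIntegrable (fun y => A * Real.exp (-a * |y|) * f 0)
      MeasureTheory.volume (-xT) xT :=
    Continuous.intervalIntegrable ((continuous_const.mul hcg).mul continuous_const) _ _
  have step1 : u 0 ≤ ∫ y in (-xT)..xT, A * Real.exp (-a * |y|) * f 0 := by
    rw [hu_int 0]
    apply intervalIntegral.integral_mono_on hxT' hint1 hint2
    intro y hy
    have hE1 : 0 < Real.exp (-a * |0 - y|) := Real.exp_pos _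
    have hE2 : 0 < Real.exp (-|0 - y|) := Real.exp_pos _
    have hy0 : |0 - y| = |y| := by rw [zero_sub, abs_neg]
    rw [hy0] at hE1 hE2 ⊢
    have h1 : 1 ≤ f y := hf1 y hy
    have h2 : f y ≤ f 0 := hfle y
    have hA0 : 0 < A := by linarith
    have key1 : Real.exp (-|y|) * (α * (u y - uT) + 1) ≥ 0 := by
      have : 0 ≤ α * (u y - uT) + 1 := by
        have := h1; simp only [hf] at this; linarith
      positivity
    have key2 : A * Real.exp (-a * |y|) * (f 0 - f y) ≥ 0 := by
      have : 0 ≤ f 0 - f y := by linarith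
      positivity
    simp only [hf] at h1 h2 key2 ⊢
    nlinarith
  -- pull out constants
  have step2 : (∫ y in (-xT)..xT, A * Real.exp (-a * |y|) * f 0)
      = (A * f 0) * ∫ y in (-xT)..xT, Real.exp (-a * |y|) := by
    rw [← intervalIntegral.integral_const_mul]
    apply intervalIntegral.integral_congr
    intro y _
    ring
  -- compute/bound the integral of exp(-a|y|)
  have hd1 : ∀ y : ℝ, HasDerivAt (fun t => -Real.exp (-a * t) / a) (Real.exp (-a * y)) y := by
    intro y
    have h1 : HasDerivAt (fun t : ℝ => -a * t) (-a) y := by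
      simpa using (hasDerivAt_id y).const_mul (-a)
    have h2 := h1.exp
    have h3 := (h2.neg).div_const a
    exact h3.congr_deriv (by rw [div_eq_iff ha0']; ring)
  have hd2 : ∀ y : ℝ, HasDerivAt (fun t => Real.exp (a * t) / a) (Real.exp (a * y)) y := by
    intro y
    have h1 : HasDerivAt (fun t : ℝ => a * t) a y := by
      simpa using (hasDerivAt_id y).const_mul a
    have h2 := h1.exp
    have h3 := h2.div_const a
    exact h3.congr_deriv (by rw [div_eq_iff ha0'])
  have hI1 : (∫ y in (0:ℝ)..xT, Real.exp (-a * |y|))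
      = (1 - Real.exp (-a * xT)) / a := by
    have hcongr : (∫ y in (0:ℝ)..xT, Real.exp (-a * |y|))
        = ∫ y in (0:ℝ)..xT, Real.exp (-a * y) := by
      apply intervalIntegral.integral_congr
      intro y hy
      rw [Set.uIcc_of_le (le_of_lt hxT)] at hy
      show Real.exp (-a * |y|) = Real.exp (-a * y)
      rw [abs_of_nonneg hy.1]
    rw [hcongr]
    rw [intervalIntegral.integral_eq_sub_of_hasDerivAt (fun y _ => hd1 y)
      (Continuous.intervalIntegrable
        (Real.continuous_exp.comp (continuous_const.mul continuous_id)) _ _)]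
    simp [Real.exp_zero]
    ring
  have hI2 : (∫ y in (-xT)..(0:ℝ), Real.exp (-a * |y|))
      = (1 - Real.exp (-a * xT)) / a := by
    have hcongr : (∫ y in (-xT)..(0:ℝ), Real.exp (-a * |y|))
        = ∫ y in (-xT)..(0:ℝ), Real.exp (a * y) := by
      apply intervalIntegral.integral_congr
      intro y hy
      rw [Set.uIcc_of_le (by linarith : (-xT) ≤ 0)] at hy
      show Real.exp (-a * |y|) = Real.exp (a * y)
      rw [abs_of_nonpos hy.2]
      ring_nf
    rw [hcongr]
    rw [intervalIntegral.integral_eq_sub_of_hasDerivAt (fun y _ => hd2 y)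
      (Continuous.intervalIntegrable
        (Real.continuous_exp.comp (continuous_const.mul continuous_id)) _ _)]
    simp [Real.exp_zero]
    ring_nf
  have hsplit : (∫ y in (-xT)..xT, Real.exp (-a * |y|))
      = 2 * (1 - Real.exp (-a * xT)) / a := by
    have := intervalIntegral.integral_add_adjacent_intervals (μ := MeasureTheory.volume)
      (Continuous.intervalIntegrable hcg (-xT) 0)
      (Continuous.intervalIntegrable hcg 0 xT)
    rw [← this, hI1, hI2]
    ring
  have hIle : (∫ y in (-xT)..xT, Real.exp (-a * |y|)) ≤ 2 / a := by
    rw [hsplit]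
    have h := Real.exp_pos (-a * xT)
    rw [div_le_div_iff₀ ha0 ha0]
    nlinarith
  have hAf0 : 0 ≤ A * f 0 := by nlinarith
  have final : u 0 ≤ (A * f 0) * (2 / a) := by
    calc u 0 ≤ (A * f 0) * ∫ y in (-xT)..xT, Real.exp (-a * |y|) := by
          rw [← step2]; exact step1
      _ ≤ (A * f 0) * (2 / a) := mul_le_mul_of_nonneg_left hIle hAf0
  refine ⟨0, ⟨by linarith, by linarith⟩, ?_⟩
  have heq : (A * f 0) * (2 / a)
      = α * (2 * A / a) * u 0 + (1 - α * uT) * (2 * A / a) := by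
    simp only [hf]
    field_simp
    ring
  linarith [heq ▸ final]
end

section
/- For A>1, a>1, set M = ∫_0^{ln(A)/(a-1)} (A e^{-at} - e^{-t}) dt and L = A/a - 1. If u_T satisfies max(L,0) < u_T < M, then the equation Φ(x) = u_T with Φ(x) = (A/a)(1-e^{-2ax}) - (1-e^{-2x}) has at least two distinct solutions x > 0. -/
theorem amari_two_pulses (A a uT : ℝ) (hA : 1 < A) (ha : 1 < a)
    (huT_lo : max (A / a - 1) 0 < uT)
    (huT_hi : uT < ∫ t in (0 : ℝ)..(Real.log A / (a - 1)), (A * Real.exp (-a * t) - Real.exp (-t))) :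
    ∃ x y : ℝ, 0 < x ∧ 0 < y ∧ x ≠ y ∧
      A / a * (1 - Real.exp (-2 * a * x)) - (1 - Real.exp (-2 * x)) = uT ∧
      A / a * (1 - Real.exp (-2 * a * y)) - (1 - Real.exp (-2 * y)) = uT := by
  have ha0 : (0:ℝ) < a := by linarith
  have hane : a ≠ 0 := ne_of_gt ha0
  set f : ℝ → ℝ := fun x => A / a * (1 - Real.exp (-2 * a * x)) - (1 - Real.exp (-2 * x)) with hf
  set T : ℝ := Real.log A / (a - 1) with hT
  have hT0 : 0 < T := div_pos (Real.log_pos hA) (by linarith)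
  -- compute the integral = f (T/2)
  have hderiv : ∀ t ∈ Set.uIcc (0:ℝ) T, HasDerivAt (fun t => -(A/a) * Real.exp (-a*t) + Real.exp (-t))
      (A * Real.exp (-a*t) - Real.exp (-t)) t := by
    intro t _
    have hl1 : HasDerivAt (fun t : ℝ => -a * t) (-a) t := by
      simpa using (hasDerivAt_id t).const_mul (-a)
    have hl2 : HasDerivAt (fun t : ℝ => -t) (-1) t := by
      exact (hasDerivAt_id' t).neg
    have h1 : HasDerivAt (fun t : ℝ => Real.exp (-a*t)) (Real.exp (-a*t) * (-a)) t := hl1.exp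
    have h2 : HasDerivAt (fun t : ℝ => Real.exp (-t)) (Real.exp (-t) * (-1)) t := hl2.exp
    have := ((h1.const_mul (-(A/a))).add h2)
    convert this using 1
    · rfl
    · rfl
    · rfl
    field_simp
    ring
  have hcontI : IntervalIntegrable (fun t => A * Real.exp (-a*t) - Real.exp (-t))
      MeasureTheory.volume 0 T := by
    apply Continuous.intervalIntegrable
    exact (continuous_const.mul (Real.continuous_exp.comp
      (continuous_const.mul continuous_id))).sub
      (Real.continuous_exp.comp continuous_neg)
  have hint : (∫ t in (0:ℝ)..T, (A * Real.exp (-a * t) - Real.exp (-t))) = f (T/2) := by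
    rw [intervalIntegral.integral_eq_sub_of_hasDerivAt hderiv hcontI]
    have e1 : -2 * a * (T/2) = -a * T := by ring
    have e2 : -2 * (T/2) = -T := by ring
    simp only [hf, e1, e2, mul_zero, neg_zero, Real.exp_zero]
    field_simp
    ring
  have hM : uT < f (T/2) := by rwa [hint] at huT_hi
  have huT0 : 0 < uT := lt_of_le_of_lt (le_max_right _ _) huT_lo
  have hL : A / a - 1 < uT := lt_of_le_of_lt (le_max_left _ _) huT_lo
  have hcont : Continuous f := by
    have h1 : Continuous fun x : ℝ => Real.exp (-2*a*x) :=
      Real.continuous_exp.comp (continuous_const.mul continuous_id)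
    have h2 : Continuous fun x : ℝ => Real.exp (-2*x) :=
      Real.continuous_exp.comp (continuous_const.mul continuous_id)
    exact (continuous_const.mul (continuous_const.sub h1)).sub (continuous_const.sub h2)
  have hf0 : f 0 = 0 := by simp [hf]
  -- first solution in (0, T/2)
  have hx : ∃ x ∈ Set.Ioo (0:ℝ) (T/2), f x = uT := by
    have := intermediate_value_Ioo (by linarith : (0:ℝ) ≤ T/2) hcont.continuousOn
    have hu : uT ∈ Set.Ioo (f 0) (f (T/2)) := by rw [hf0]; exact ⟨huT0, hM⟩
    obtain ⟨x, hx1, hx2⟩ := this hu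
    exact ⟨x, hx1, hx2⟩
  -- tail point
  have hδ0 : 0 < uT - (A/a - 1) := by linarith
  set X : ℝ := max (T/2 + 1) (1 - Real.log (uT - (A/a - 1))) with hX
  have hX1 : T/2 + 1 ≤ X := le_max_left _ _
  have hX0 : 0 < X := by
    have : 0 < T/2 + 1 := by linarith
    linarith
  have hfX : f X < uT := by
    have h1 : Real.exp (-2 * X) ≤ Real.exp (-X) := by
      apply Real.exp_le_exp.2; linarith
    have h2 : Real.exp (-X) < uT - (A/a - 1) := by
      have : 1 - Real.log (uT - (A/a - 1)) ≤ X := le_max_right _ _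
      have hlt : -X < Real.log (uT - (A/a - 1)) := by linarith
      calc Real.exp (-X) < Real.exp (Real.log (uT - (A/a - 1))) := Real.exp_lt_exp.2 hlt
        _ = _ := Real.exp_log hδ0
    have h3 : 0 < A / a * Real.exp (-2 * a * X) :=
      mul_pos (div_pos (by linarith) ha0) (Real.exp_pos _)
    have : f X = (A/a - 1) + Real.exp (-2*X) - A/a * Real.exp (-2*a*X) := by
      simp [hf]; ring
    rw [this]
    have h4 : Real.exp (-2*X) < uT - (A/a - 1) := lt_of_le_of_lt h1 h2
    linarith [h3, h4]
  -- second solution in (T/2, X)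
  have hy : ∃ y ∈ Set.Ioo (T/2) X, f y = uT := by
    have hle : T/2 ≤ X := by linarith
    have := intermediate_value_Ioo' hle hcont.continuousOn
    have hu : uT ∈ Set.Ioo (f X) (f (T/2)) := ⟨hfX, hM⟩
    obtain ⟨y, hy1, hy2⟩ := this hu
    exact ⟨y, hy1, hy2⟩
  obtain ⟨x, ⟨hx1, hx2⟩, hxe⟩ := hx
  obtain ⟨y, ⟨hy1, hy2⟩, hye⟩ := hy
  exact ⟨x, y, hx1, by linarith, by intro h; subst h; linarith, hxe, hye⟩
end
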